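/- arXiv:1108.2863 — 3 statements merged into one kernel-verified Lean document; each statement's English description precedes it below -/
import Mathlib

section
/- Let R be a ring such that 2 is not a unit of R. Then the chromatic number of the unit graph of R/J(R) equals the chromatic number of the unit graph of R, i.e., χ(G(R/J(R))) = χ(G(R)). -/
/-- The unit graph of a ring `R`: vertices are elements of `R`, and two distinct
vertices `a` and `b` are adjacent iff `a + b` is a unit of `R`. -/
def unitGraph (R : Type*) [Ring R] : SimpleGraph R where
  Adj a b := a ≠ b ∧ IsUnit (a + b)
  symm := ⟨fun a b ⟨h1, h2⟩ => ⟨h1.symm, add_comm a b ▸ h2⟩⟩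
  loopless := ⟨fun _ ⟨h, _⟩ => h rfl⟩

/-- The clique number of a graph, valued in `ℕ∞` to allow infinite cliques. -/
noncomputable def ecliqueNum {V : Type*} (G : SimpleGraph V) : ℕ∞ :=
  ⨆ s ∈ {s : Set V | G.IsClique s}, s.encard

/-- The independence number of a graph, valued in `ℕ∞`. -/
noncomputable def eindepNum {V : Type*} (G : SimpleGraph V) : ℕ∞ :=
  ⨆ s ∈ {s : Set V | s.Pairwise fun a b => ¬ G.Adj a b}, s.encard

/-- The Jacobson radical of a (not necessarily commutative) ring, as a two-sided ideal:
the intersection of all maximal left ideals. -/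
noncomputable def ringJacobson (R : Type*) [Ring R] : TwoSidedIdeal R :=
  (⊥ : TwoSidedIdeal R).jacobson

/-- The quotient of `R` by its Jacobson radical. -/
abbrev modJacobson (R : Type*) [Ring R] := (ringJacobson R).ringCon.Quotient

/-!
Elements of the Jacobson radical `J` are "small": adding one to a unit gives a unit. Hence an
element of `R` is a unit iff its image in `R/J` is, i.e. the quotient map is a local
homomorphism. A local homomorphism `f` maps edges of the unit graph to edges unless it
identifies two adjacent vertices `a ≠ b`; but then `f (a + b) = f (2a)`, so `2a`, and with it the
central element `2`, is a unit. Conversely any set-theoretic section of the surjective quotient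
map maps edges of `G(R/J)` to edges of `G(R)`. Graph homomorphisms in both directions force equal
chromatic numbers.
-/

theorem isUnit_of_isUnit_mul_of_isUnit_mul {M : Type*} [Monoid M] {x y : M}
    (hxy : IsUnit (x * y)) (hyx : IsUnit (y * x)) : IsUnit x := by
  obtain ⟨c, hc⟩ := hxy.exists_right_inv
  obtain ⟨a, ha⟩ := hyx.exists_left_inv
  have hright : x * (y * c) = 1 := by rwa [← mul_assoc]
  have hleft : a * y * x = 1 := by rwa [mul_assoc]
  exact isUnit_iff_exists.2 ⟨y * c, hright, left_inv_eq_right_inv hleft hright ▸ hleft⟩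

section Jacobson

variable {R S : Type*} [Ring R] [Ring S]

theorem exists_mul_one_add_eq_one_of_mem_jacobson_bot {x : R}
    (hx : x ∈ Ideal.jacobson (⊥ : Ideal R)) : ∃ z, z * (1 + x) = 1 := by
  obtain ⟨z, hz⟩ := Ideal.mem_jacobson_iff.1 hx 1
  rw [Ideal.mem_bot, sub_eq_zero, mul_one] at hz
  exact ⟨z, by rw [mul_add, mul_one, add_comm, hz]⟩

theorem isUnit_one_add_of_mem_jacobson_bot {x : R}
    (hx : x ∈ Ideal.jacobson (⊥ : Ideal R)) : IsUnit (1 + x) := by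
  obtain ⟨z, hz⟩ := exists_mul_one_add_eq_one_of_mem_jacobson_bot hx
  -- `z = 1 - z x` is again of the form `1 + j`, so it has a left inverse too.
  have hz_eq : z = 1 + -(z * x) := by
    rw [← sub_eq_add_neg, eq_sub_iff_add_eq, ← mul_one_add, hz]
  obtain ⟨w, hw⟩ := exists_mul_one_add_eq_one_of_mem_jacobson_bot
    (neg_mem (Ideal.mul_mem_left _ z hx))
  rw [← hz_eq] at hw
  exact isUnit_iff_exists.2 ⟨z, left_inv_eq_right_inv hw hz ▸ hw, hz⟩

theorem isUnit_add_of_mem_jacobson_bot {u j : R} (hu : IsUnit u)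
    (hj : j ∈ Ideal.jacobson (⊥ : Ideal R)) : IsUnit (u + j) := by
  obtain ⟨v, rfl⟩ := hu
  have hfactor : (v : R) + j = v * (1 + ↑v⁻¹ * j) := by
    rw [mul_add, mul_one, ← mul_assoc, Units.mul_inv, one_mul]
  rw [hfactor]
  exact v.isUnit.mul (isUnit_one_add_of_mem_jacobson_bot (Ideal.mul_mem_left _ _ hj))

theorem isLocalHom_of_surjective_of_ker_le_jacobson_bot (f : R →+* S)
    (hf : Function.Surjective f) (hker : ∀ x, f x = 0 → x ∈ Ideal.jacobson (⊥ : Ideal R)) :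
    IsLocalHom f where
  map_nonunit x := by
    rintro ⟨u, hu⟩
    obtain ⟨y, hy⟩ := hf ↑u⁻¹
    have hunit_of_map_eq_one {r : R} (hr : f r = 1) : IsUnit r := by
      simpa using isUnit_add_of_mem_jacobson_bot isUnit_one (hker (r - 1) (by simp [hr]))
    exact isUnit_of_isUnit_mul_of_isUnit_mul
      (hunit_of_map_eq_one (by rw [map_mul, hy, ← hu, Units.mul_inv]))
      (hunit_of_map_eq_one (by rw [map_mul, hy, ← hu, Units.inv_mul]))

theorem mem_ringJacobson_iff {x : R} :
    x ∈ ringJacobson R ↔ x ∈ Ideal.jacobson (⊥ : Ideal R) := by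
  rw [ringJacobson, TwoSidedIdeal.mem_jacobson_iff, Ideal.mem_jacobson_iff]
  simp [TwoSidedIdeal.mem_bot]

instance isLocalHom_modJacobson_mk : IsLocalHom (ringJacobson R).ringCon.mk' :=
  isLocalHom_of_surjective_of_ker_le_jacobson_bot _ (RingCon.mk'_surjective _) fun x hx =>
    mem_ringJacobson_iff.1 <| by
      rwa [← TwoSidedIdeal.ker_ringCon_mk' (ringJacobson R), TwoSidedIdeal.mem_ker]

end Jacobson

section UnitGraph

variable {R S : Type*} [Ring R] [Ring S]

def unitGraphHomOfIsLocalHom (f : R →+* S) [IsLocalHom f] (h2 : ¬ IsUnit (2 : R)) :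
    unitGraph R →g unitGraph S where
  toFun := f
  map_rel' {a b} := by
    rintro ⟨-, hab⟩
    refine ⟨fun hfab => h2 ?_, by simpa only [map_add] using hab.map f⟩
    have hfa : f (2 * a) = f (a + b) := by rw [two_mul, map_add, map_add, hfab]
    have h2a : IsUnit (2 * a) := (isUnit_map_iff f _).1 (hfa ▸ hab.map f)
    exact isUnit_of_isUnit_mul_of_isUnit_mul h2a (by rwa [mul_two, ← two_mul])

noncomputable def unitGraphHomOfSurjective (f : R →+* S) [IsLocalHom f]
    (hf : Function.Surjective f) : unitGraph S →g unitGraph R where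
  toFun := Function.surjInv hf
  map_rel' {x y} := by
    rintro ⟨hxy, hunit⟩
    refine ⟨(Function.injective_surjInv hf).ne hxy, ?_⟩
    rwa [← isUnit_map_iff f, map_add, Function.surjInv_eq hf, Function.surjInv_eq hf]

end UnitGraph

/-- If `2` is not a unit of `R`, then the chromatic number of the unit graph of
`R/J(R)` equals that of `G(R)`. -/
theorem chromaticNumber_unitGraph_modJacobson_eq (R : Type*) [Ring R]
    (h2 : ¬ IsUnit (2 : R)) :
    (unitGraph (modJacobson R)).chromaticNumber = (unitGraph R).chromaticNumber :=
  le_antisymm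
    (SimpleGraph.chromaticNumber_mono_of_hom
      (unitGraphHomOfSurjective (ringJacobson R).ringCon.mk' (RingCon.mk'_surjective _)))
    (SimpleGraph.chromaticNumber_mono_of_hom
      (unitGraphHomOfIsLocalHom (ringJacobson R).ringCon.mk' h2))
end

section
/- Let R be a left Artinian ring such that 2 is a unit of R and the clique number of the unit graph G(R) is finite. Then R is a finite ring. -/
/-! For `x, y` in the Jacobson radical `J`, `(1 + x) + (1 + y) = 2 * (1 + 2⁻¹ * (x + y))` is a
unit, so `1 + J` is a clique of the unit graph and `J` is finite. Units lift modulo `J`, so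
cliques of `R ⧸ J` lift to cliques of `R`. By Wedderburn–Artin, `R ⧸ J` is a finite product of
matrix rings `Mₙ(D)` over division rings; `D` embeds into `Mₙ(D)` as the scalars, and `Mₙ(D)` into
the product by padding the other factors with `1` (their pairwise sums are the unit `2`). An
infinite division ring has arbitrarily large cliques (any set avoiding pairs `{a, -a}`), so every
`D` is finite, hence so are `R ⧸ J` and `R`. -/

section Jacobson

variable {R : Type*} [Ring R]

theorem exists_mul_one_add_eq_one_of_mem_jacobson {x : R} (hx : x ∈ Ring.jacobson R) :
    ∃ s, s * (1 + x) = 1 := by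
  rw [← Ideal.jacobson_bot] at hx
  obtain ⟨s, hs⟩ := Ideal.exists_mul_add_sub_mem_of_mem_jacobson x hx
  exact ⟨s, by rwa [Ideal.mem_bot, sub_eq_zero, add_comm] at hs⟩

theorem isUnit_one_add_of_mem_jacobson {x : R} (hx : x ∈ Ring.jacobson R) :
    IsUnit (1 + x) := by
  obtain ⟨s, hs⟩ := exists_mul_one_add_eq_one_of_mem_jacobson hx
  -- `s = 1 - s * x` lies in `1 + J` too, so it has a left inverse, which must be `1 + x`.
  have hs' : s = 1 + -(s * x) := by rw [← sub_eq_add_neg, eq_sub_iff_add_eq, ← mul_one_add, hs]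
  obtain ⟨t, ht⟩ := exists_mul_one_add_eq_one_of_mem_jacobson
    (neg_mem (Ideal.mul_mem_left _ s hx))
  rw [← hs'] at ht
  exact isUnit_iff_exists_and_exists.mpr ⟨⟨s, left_inv_eq_right_inv ht hs ▸ ht⟩, ⟨s, hs⟩⟩

instance isLocalHom_mk_jacobson : IsLocalHom (Ideal.Quotient.mk (Ring.jacobson R)) where
  map_nonunit a ha := by
    obtain ⟨b', hab, hba⟩ := isUnit_iff_exists.mp ha
    obtain ⟨b, rfl⟩ := Ideal.Quotient.mk_surjective b'
    rw [← map_mul, ← map_one (Ideal.Quotient.mk _), Ideal.Quotient.eq] at hab hba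
    obtain ⟨u, hu⟩ := by simpa using isUnit_one_add_of_mem_jacobson hab
    obtain ⟨v, hv⟩ := by simpa using isUnit_one_add_of_mem_jacobson hba
    refine isUnit_iff_exists_and_exists.mpr ⟨⟨b * ↑u⁻¹, ?_⟩, ⟨↑v⁻¹ * b, ?_⟩⟩
    · rw [← mul_assoc, ← hu, Units.mul_inv]
    · rw [mul_assoc, ← hv, Units.inv_mul]

end Jacobson

theorem encard_le_ecliqueNum {V : Type*} {G : SimpleGraph V} {s : Set V} (hs : G.IsClique s) :
    s.encard ≤ ecliqueNum G :=
  le_iSup₂ (f := fun t (_ : t ∈ {t : Set V | G.IsClique t}) => t.encard) s hs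

section UnitGraph

variable {R S : Type*} [Ring R] [Ring S]

theorem isClique_unitGraph_iff {s : Set R} :
    (unitGraph R).IsClique s ↔ s.Pairwise fun a b => IsUnit (a + b) :=
  ⟨fun hs _ ha _ hb hab => (hs ha hb hab).2, fun hs _ ha _ hb hab => ⟨hab, hs ha hb hab⟩⟩

theorem Set.Pairwise.finite_of_isUnit_add (hR : ecliqueNum (unitGraph R) ≠ ⊤) {s : Set R}
    (hs : s.Pairwise fun a b => IsUnit (a + b)) : s.Finite :=
  Set.encard_lt_top_iff.mp <|
    (encard_le_ecliqueNum (isClique_unitGraph_iff.mpr hs)).trans_lt (lt_top_iff_ne_top.mpr hR)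

theorem ecliqueNum_unitGraph_le_of_injective {f : R → S} (hf : Function.Injective f)
    (hunit : ∀ a b, IsUnit (a + b) → IsUnit (f a + f b)) :
    ecliqueNum (unitGraph R) ≤ ecliqueNum (unitGraph S) := by
  refine iSup₂_le fun s hs => ?_
  have hclique : (unitGraph S).IsClique (f '' s) := by
    rw [isClique_unitGraph_iff]
    rintro _ ⟨a, ha, rfl⟩ _ ⟨b, hb, rfl⟩ hne
    exact hunit a b ((isClique_unitGraph_iff.mp hs) ha hb (ne_of_apply_ne f hne))
  exact (hf.encard_image s).symm.trans_le (encard_le_ecliqueNum hclique)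

theorem ecliqueNum_unitGraph_le_of_injective_ringHom (f : R →+* S) (hf : Function.Injective f) :
    ecliqueNum (unitGraph R) ≤ ecliqueNum (unitGraph S) :=
  ecliqueNum_unitGraph_le_of_injective hf fun a b h => map_add f a b ▸ h.map f

theorem ecliqueNum_unitGraph_le_of_surjective (f : R →+* S) [IsLocalHom f]
    (hf : Function.Surjective f) : ecliqueNum (unitGraph S) ≤ ecliqueNum (unitGraph R) :=
  ecliqueNum_unitGraph_le_of_injective (Function.injective_surjInv hf) fun a b h =>
    isUnit_of_map_unit f _ <| by
      rwa [map_add, Function.surjInv_eq hf, Function.surjInv_eq hf]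

theorem ecliqueNum_unitGraph_le_pi {ι : Type*} [DecidableEq ι] {R : ι → Type*}
    [∀ i, Ring (R i)] (h2 : IsUnit (2 : Π i, R i)) (i : ι) :
    ecliqueNum (unitGraph (R i)) ≤ ecliqueNum (unitGraph (Π i, R i)) := by
  refine ecliqueNum_unitGraph_le_of_injective (f := Function.update (1 : Π i, R i) i)
    (Function.update_injective _ i) fun a b h => ?_
  rw [← Function.update_add, one_add_one_eq_two, Pi.isUnit_iff]
  intro j
  rcases eq_or_ne j i with rfl | hj
  · simpa using h
  · simpa [hj] using h2.map (Pi.evalRingHom R j)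

end UnitGraph

theorem finite_jacobson_of_ecliqueNum_ne_top {R : Type*} [Ring R] (h2 : IsUnit (2 : R))
    (hR : ecliqueNum (unitGraph R) ≠ ⊤) : Finite (Ring.jacobson R) := by
  have hclique : ((1 + ·) '' (Ring.jacobson R : Set R)).Pairwise fun a b => IsUnit (a + b) := by
    rintro _ ⟨x, hx, rfl⟩ _ ⟨y, hy, rfl⟩ -
    have hsum : (1 + x) + (1 + y) = 2 * (1 + ↑h2.unit⁻¹ * (x + y)) := by
      rw [mul_add, mul_one, ← mul_assoc, h2.mul_val_inv, one_mul, one_add_one_eq_two.symm]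
      abel
    rw [hsum]
    exact h2.mul <| isUnit_one_add_of_mem_jacobson <|
      Ideal.mul_mem_left _ _ (add_mem hx hy)
  exact (hclique.finite_of_isUnit_add hR).of_finite_image (add_right_injective 1).injOn
    |>.to_subtype

theorem exists_finset_card_eq_pairwise_add_ne_zero {G : Type*} [AddCommGroup G] [Infinite G]
    (n : ℕ) : ∃ s : Finset G, s.card = n ∧ (s : Set G).Pairwise fun a b => a + b ≠ 0 := by
  classical
  induction n with
  | zero => exact ⟨∅, rfl, by simp⟩
  | succ n ih =>
    obtain ⟨s, hcard, hs⟩ := ih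
    obtain ⟨q, hq⟩ := Infinite.exists_notMem_finset (s ∪ s.image Neg.neg)
    have hqs : q ∉ s := fun h => hq (Finset.mem_union_left _ h)
    have hq_add : ∀ b ∈ s, q + b ≠ 0 := fun b hb h =>
      hq (Finset.mem_union_right _ (Finset.mem_image.mpr ⟨b, hb, neg_eq_of_add_eq_zero_left h⟩))
    refine ⟨insert q s, by rw [Finset.card_insert_of_notMem hqs, hcard], ?_⟩
    rw [Finset.coe_insert, Set.pairwise_insert]
    exact ⟨hs, fun b hb _ => ⟨hq_add b hb, add_comm b q ▸ hq_add b hb⟩⟩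

theorem ecliqueNum_unitGraph_eq_top {D : Type*} [DivisionRing D] [Infinite D] :
    ecliqueNum (unitGraph D) = ⊤ := by
  refine ENat.eq_top_iff_forall_ge.mpr fun n => ?_
  obtain ⟨s, hcard, hs⟩ := exists_finset_card_eq_pairwise_add_ne_zero (G := D) n
  calc (n : ℕ∞) = (s : Set D).encard := by rw [Set.encard_coe_eq_coe_finsetCard, hcard]
    _ ≤ ecliqueNum (unitGraph D) :=
      encard_le_ecliqueNum <| isClique_unitGraph_iff.mpr fun a ha b hb hab =>
        (hs ha hb hab).isUnit

theorem finite_of_isSemisimpleRing {S : Type*} [Ring S] [IsSemisimpleRing S]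
    (h2 : IsUnit (2 : S)) (hS : ecliqueNum (unitGraph S) ≠ ⊤) : Finite S := by
  obtain ⟨n, D, d, _, hd, ⟨e⟩⟩ := IsSemisimpleRing.exists_ringEquiv_pi_matrix_divisionRing S
  have hD : ∀ i, Finite (D i) := fun i => by
    refine not_infinite_iff_finite.mp fun _ =>
      hS (eq_top_mono ?_ (ecliqueNum_unitGraph_eq_top (D := D i)))
    calc ecliqueNum (unitGraph (D i))
        ≤ ecliqueNum (unitGraph (Matrix (Fin (d i)) (Fin (d i)) (D i))) :=
          ecliqueNum_unitGraph_le_of_injective_ringHom (Matrix.scalar _)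
            fun a b h => Matrix.scalar_inj.mp h
      _ ≤ ecliqueNum (unitGraph (Π i, Matrix (Fin (d i)) (Fin (d i)) (D i))) :=
          ecliqueNum_unitGraph_le_pi (map_ofNat e 2 ▸ h2.map e) i
      _ ≤ ecliqueNum (unitGraph S) :=
          ecliqueNum_unitGraph_le_of_injective_ringHom e.symm.toRingHom e.symm.injective
  exact Finite.of_equiv _ e.symm.toEquiv

/-- A left Artinian ring in which `2` is a unit and whose unit graph has finite
clique number is a finite ring. -/
theorem finite_of_isArtinianRing_of_ecliqueNum_lt_top (R : Type*) [Ring R]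
    [IsArtinianRing R] (h2 : IsUnit (2 : R)) (hclique : ecliqueNum (unitGraph R) ≠ ⊤) :
    Finite R := by
  have : Finite (Ring.jacobson R) := finite_jacobson_of_ecliqueNum_ne_top h2 hclique
  have hquot : Finite (R ⧸ Ring.jacobson R) :=
    finite_of_isSemisimpleRing (h2.map (Ideal.Quotient.mk _)) <|
      ne_top_of_le_ne_top hclique <|
        ecliqueNum_unitGraph_le_of_surjective _ Ideal.Quotient.mk_surjective
  exact @Finite.of_addSubgroup_quotient _ _ (Ring.jacobson R).toAddSubgroup _ hquot
end

section
/- Let R be a ring such that the Jacobson radical J(R) is nonzero and 2 is a unit of R. Then the unit graph G(R) is not a bipartite graph (indeed it contains a triangle: for any nonzero x in J(R), the vertices 0, 1 and 1 - x form a triangle). -/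
/-!
Elements of the Jacobson radical are quasi-regular, so a unit plus an element of `J(R)` is a
unit. For `0 ≠ x ∈ J(R)` this makes `1 = 0 + 1`, `1 - x = (1 - x) + 0` and `2 - x = 1 + (1 - x)`
units (the last because `2` is), so `0`, `1`, `1 - x` is a triangle in `G(R)`, and a graph with
a triangle is not `2`-colourable.
-/

theorem SimpleGraph.not_colorable_two_of_adj {V : Type*} {G : SimpleGraph V} {a b c : V}
    (hab : G.Adj a b) (hbc : G.Adj b c) (hca : G.Adj c a) : ¬ G.Colorable 2 := fun hG => by
  classical
  exact hG.cliqueFree (by norm_num) {a, b, c} (is3Clique_triple_iff.2 ⟨hab, hca.symm, hbc⟩)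

section ringJacobson

variable {R : Type*} [Ring R] {x : R}

theorem exists_mul_one_add_eq_one_of_mem_ringJacobson (hx : x ∈ ringJacobson R) :
    ∃ z, z * (1 + x) = 1 := by
  obtain ⟨z, hz⟩ := TwoSidedIdeal.mem_jacobson_iff.1 hx 1
  rw [TwoSidedIdeal.mem_bot, mul_one, sub_eq_zero] at hz
  exact ⟨z, by rw [mul_add, mul_one, add_comm, hz]⟩

theorem isUnit_one_add_of_mem_ringJacobson (hx : x ∈ ringJacobson R) : IsUnit (1 + x) := by
  obtain ⟨z, hz⟩ := exists_mul_one_add_eq_one_of_mem_ringJacobson hx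
  -- `z = 1 - z * x` lies in `1 + J(R)` as well, so it has a left inverse, which must be `1 + x`.
  have hz_eq : z = 1 + -(z * x) := by rw [← hz]; noncomm_ring
  have hzx : -(z * x) ∈ ringJacobson R :=
    TwoSidedIdeal.neg_mem _ (TwoSidedIdeal.mul_mem_left _ _ _ hx)
  obtain ⟨u, hu⟩ := exists_mul_one_add_eq_one_of_mem_ringJacobson hzx
  rw [← hz_eq] at hu
  have hu_eq : u = 1 + x := left_inv_eq_right_inv hu hz
  exact ⟨⟨1 + x, z, hu_eq ▸ hu, hz⟩, rfl⟩

theorem IsUnit.add_of_mem_ringJacobson {u : R} (hu : IsUnit u) (hx : x ∈ ringJacobson R) :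
    IsUnit (u + x) := by
  have hux : ↑hu.unit⁻¹ * x ∈ ringJacobson R := TwoSidedIdeal.mul_mem_left _ _ _ hx
  have h_eq : u + x = u * (1 + ↑hu.unit⁻¹ * x) := by
    rw [mul_add, mul_one, ← mul_assoc, hu.mul_val_inv, one_mul]
  rw [h_eq]
  exact hu.mul (isUnit_one_add_of_mem_ringJacobson hux)

theorem IsUnit.sub_of_mem_ringJacobson {u : R} (hu : IsUnit u) (hx : x ∈ ringJacobson R) :
    IsUnit (u - x) := by
  simpa only [sub_eq_add_neg] using hu.add_of_mem_ringJacobson (TwoSidedIdeal.neg_mem _ hx)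

theorem unitGraph_triangle_of_mem_ringJacobson (h2 : IsUnit (2 : R)) (hxJ : x ∈ ringJacobson R)
    (hx0 : x ≠ 0) :
    (unitGraph R).Adj 0 1 ∧ (unitGraph R).Adj 1 (1 - x) ∧ (unitGraph R).Adj (1 - x) 0 := by
  have : Nontrivial R := ⟨⟨x, 0, hx0⟩⟩
  have h1x : IsUnit (1 - x) := isUnit_one.sub_of_mem_ringJacobson hxJ
  have h2x : IsUnit (1 + (1 - x)) := by
    rw [← add_sub_assoc, one_add_one_eq_two]
    exact h2.sub_of_mem_ringJacobson hxJ
  refine ⟨⟨zero_ne_one, by rw [zero_add]; exact isUnit_one⟩, ⟨?_, h2x⟩, ⟨?_, by rwa [add_zero]⟩⟩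
  · rwa [ne_eq, eq_sub_iff_add_eq, add_eq_left]
  · exact h1x.ne_zero

end ringJacobson

theorem TwoSidedIdeal.exists_mem_ne_zero_of_ne_bot {R : Type*} [Ring R] {I : TwoSidedIdeal R}
    (hI : I ≠ ⊥) : ∃ x ∈ I, x ≠ 0 := by
  by_contra! h
  exact hI (eq_bot_iff.2 fun x hx => (TwoSidedIdeal.mem_bot _).2 (h x hx))

/-- If the Jacobson radical of `R` is nonzero and `2` is a unit of `R`, then the unit
graph `G(R)` is not bipartite; indeed for any nonzero `x ∈ J(R)` the vertices
`0`, `1` and `1 - x` form a triangle. -/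
theorem unitGraph_not_bipartite_of_jacobson_ne_bot (R : Type*) [Ring R]
    (hJ : ringJacobson R ≠ ⊥) (h2 : IsUnit (2 : R)) :
    ¬ (unitGraph R).Colorable 2 ∧
      ∀ x : R, x ∈ ringJacobson R → x ≠ 0 →
        (unitGraph R).Adj 0 1 ∧ (unitGraph R).Adj 1 (1 - x) ∧
          (unitGraph R).Adj (1 - x) 0 := by
  obtain ⟨x, hxJ, hx0⟩ := TwoSidedIdeal.exists_mem_ne_zero_of_ne_bot hJ
  obtain ⟨h01, h1x, hx1⟩ := unitGraph_triangle_of_mem_ringJacobson h2 hxJ hx0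
  exact ⟨SimpleGraph.not_colorable_two_of_adj h01 h1x hx1,
    fun _ hyJ hy0 => unitGraph_triangle_of_mem_ringJacobson h2 hyJ hy0⟩
end
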